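/- arXiv:2106.15956 — 2 statements merged into one kernel-verified Lean document; each statement's English description precedes it below -/
import Mathlib

section
/- Suppose in addition to U_K≠∅ that one of the hypotheses (b), (d1b), (K) is satisfied. Then (i) every χ ∈ R^K X_{fK} has an open neighbourhood V_χ in X_0 such that the restriction of R^K to the set X_f ∩ (R^K)^{-1}(V_χ) is injective, and (ii) the restriction of R^K to the set X_f ∩ (∪_{χ∈R^K X_{fK}} (R^K)^{-1}(V_χ)) is injective. -/
set_option linter.unusedSectionVars false

open Set

noncomputable section

/-- The compact interval `[-r,0]`. -/
abbrev Icc0 (r : ℝ) : Set ℝ := Set.Icc (-r) 0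

/-- Extension of a continuous map on `[-r,0]` to `ℝ`, by the value `0` outside. -/
def extFun {r : ℝ} {E : Type*} [TopologicalSpace E] [Zero E] (φ : C(Icc0 r, E)) : ℝ → E :=
  fun t => if h : t ∈ Icc0 r then φ ⟨t, h⟩ else 0

section extlemmas

variable {r : ℝ} {E : Type*} [NormedAddCommGroup E] [NormedSpace ℝ E]

lemma extFun_add (φ ψ : C(Icc0 r, E)) : extFun (φ + ψ) = extFun φ + extFun ψ := by
  funext t; by_cases h : t ∈ Icc0 r <;> simp [extFun, h]

lemma extFun_zero : extFun (0 : C(Icc0 r, E)) = 0 := by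
  funext t; by_cases h : t ∈ Icc0 r <;> simp [extFun, h]

lemma extFun_smul (c : ℝ) (φ : C(Icc0 r, E)) : extFun (c • φ) = c • extFun φ := by
  funext t; by_cases h : t ∈ Icc0 r <;> simp [extFun, h]

end extlemmas

/-- The space `C¹([-r,0],E)`, realized as the closed subspace of pairs `(φ, φ')` in
`C([-r,0],E) × C([-r,0],E)` such that `φ` is differentiable on `[-r,0]` with derivative `φ'`. -/
def C1sub (r : ℝ) (E : Type*) [NormedAddCommGroup E] [NormedSpace ℝ E] :
    Submodule ℝ (C(Icc0 r, E) × C(Icc0 r, E)) where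
  carrier := {p | ∀ t ∈ Icc0 r, HasDerivWithinAt (extFun p.1) (extFun p.2 t) (Icc0 r) t}
  add_mem' := by
    intro p q hp hq t ht
    have h := (hp t ht).add (hq t ht)
    have e1 : extFun (p + q).1 = fun s => extFun p.1 s + extFun q.1 s := by
      simp [Prod.fst_add, extFun_add]; rfl
    have e2 : extFun (p + q).2 t = extFun p.2 t + extFun q.2 t := by
      simp [Prod.snd_add, extFun_add]
    rw [e1, e2]; exact h
  zero_mem' := by
    intro t ht
    have e1 : extFun (0 : C(Icc0 r, E) × C(Icc0 r, E)).1 = fun _ : ℝ => (0 : E) := by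
      simp [extFun_zero]; rfl
    have e2 : extFun (0 : C(Icc0 r, E) × C(Icc0 r, E)).2 t = 0 := by
      simp [extFun_zero]
    rw [e1, e2]; exact hasDerivWithinAt_const _ _ _
  smul_mem' := by
    intro c p hp t ht
    have h := (hp t ht).const_smul c
    have e1 : extFun (c • p).1 = fun s => c • extFun p.1 s := by
      simp [Prod.smul_fst, extFun_smul]; rfl
    have e2 : extFun (c • p).2 t = c • extFun p.2 t := by
      simp [Prod.smul_snd, extFun_smul]
    rw [e1, e2]; exact h

/-- The Banach space `C¹([-r,0],E)`. -/
abbrev C1 (r : ℝ) (E : Type*) [NormedAddCommGroup E] [NormedSpace ℝ E] := ↥(C1sub r E)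

section C1ops

variable {r : ℝ} {E : Type*} [NormedAddCommGroup E] [NormedSpace ℝ E]

/-- Evaluation `φ(t)` of `φ ∈ C¹([-r,0],E)` (extended by `0` outside `[-r,0]`). -/
def evC (φ : C1 r E) (t : ℝ) : E := extFun φ.1.1 t

/-- Evaluation `φ'(t)` of the derivative of `φ ∈ C¹([-r,0],E)`. -/
def dvC (φ : C1 r E) (t : ℝ) : E := extFun φ.1.2 t

end C1ops

/-- The continuous linear map `ℝ → (Fin n → ℝ)` sending `x` to the vector `x·e_ν`. -/
def sCLM (n : ℕ) (ν : Fin n) : ℝ →L[ℝ] (Fin n → ℝ) :=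
  ContinuousLinearMap.pi (fun j => if j = ν then ContinuousLinearMap.id ℝ ℝ else 0)

/-- `ψ · e_ν` for a continuous map `ψ`. -/
def CMsingle {r : ℝ} {n : ℕ} (ν : Fin n) (φ : C(Icc0 r, ℝ)) : C(Icc0 r, Fin n → ℝ) :=
  ⟨fun t => sCLM n ν (φ t), (sCLM n ν).continuous.comp φ.continuous⟩

lemma extFun_CMsingle {r : ℝ} {n : ℕ} (ν : Fin n) (φ : C(Icc0 r, ℝ)) (t : ℝ) :
    extFun (CMsingle ν φ) t = sCLM n ν (extFun φ t) := by
  by_cases h : t ∈ Icc0 r <;> simp [extFun, CMsingle, h]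

/-- `ψ · e_ν ∈ C¹([-r,0],ℝⁿ)` for a scalar function `ψ ∈ C¹([-r,0],ℝ)`. -/
def singleC1 {r : ℝ} {n : ℕ} (ν : Fin n) (φ : C1 r ℝ) : C1 r (Fin n → ℝ) :=
  ⟨(CMsingle ν φ.1.1, CMsingle ν φ.1.2), by
    intro t ht
    have h := ((sCLM n ν).hasFDerivAt).comp_hasDerivWithinAt t (φ.2 t ht)
    have e1 : extFun (CMsingle ν φ.1.1) = (sCLM n ν) ∘ (extFun φ.1.1) := by
      funext s; exact extFun_CMsingle ν φ.1.1 s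
    rw [show (CMsingle ν φ.1.1, CMsingle ν φ.1.2).1 = CMsingle ν φ.1.1 from rfl,
      show (CMsingle ν φ.1.1, CMsingle ν φ.1.2).2 = CMsingle ν φ.1.2 from rfl,
      e1, extFun_CMsingle]
    exact h⟩

/-- The linear map `ℝⁿ → C¹([-r,0],ℝⁿ)`, `x ↦ Σ_ν x_ν ψ_ν · e_ν` (the map `Y·x`). -/
def Ymap {r : ℝ} {n : ℕ} (ψ : Fin n → C1 r ℝ) : (Fin n → ℝ) →ₗ[ℝ] C1 r (Fin n → ℝ) where
  toFun x := ∑ ν, x ν • singleC1 ν (ψ ν)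
  map_add' x y := by simp [add_smul, Finset.sum_add_distrib]
  map_smul' c x := by simp [smul_smul, Finset.smul_sum]

/-- The closed subspace `X₀ = {φ ∈ C¹ : φ'(0) = 0}`. -/
def X0sub (r : ℝ) (n : ℕ) : Submodule ℝ (C1 r (Fin n → ℝ)) where
  carrier := {φ | dvC φ 0 = 0}
  add_mem' := by
    intro φ ψ hφ hψ
    have : dvC (φ + ψ) 0 = dvC φ 0 + dvC ψ 0 := by
      simp [dvC, extFun_add]
    rw [Set.mem_setOf_eq] at *
    rw [this, hφ, hψ, add_zero]
  zero_mem' := by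
    show dvC (0 : C1 r (Fin n → ℝ)) 0 = 0
    simp [dvC, extFun_zero]
  smul_mem' := by
    intro c φ hφ
    have : dvC (c • φ) 0 = c • dvC φ 0 := by simp [dvC, extFun_smul]
    rw [Set.mem_setOf_eq] at *
    rw [this, hφ, smul_zero]

/-- The projection-like map `R φ = φ − Y·φ'(0)`. -/
def RKmap {r : ℝ} {n : ℕ} (ψ : Fin n → C1 r ℝ) (φ : C1 r (Fin n → ℝ)) : C1 r (Fin n → ℝ) :=
  φ - Ymap ψ (dvC φ 0)

section diffeos

variable {E : Type*} [NormedAddCommGroup E] [NormedSpace ℝ E]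
variable {E' : Type*} [NormedAddCommGroup E'] [NormedSpace ℝ E']

/-- `f` defines a `C¹`-diffeomorphism from `s` onto `t`: `f` is continuously differentiable
on `s`, injective on `s`, maps `s` onto `t`, and has a continuously differentiable inverse. -/
def IsC1DiffeoOn (f : E → E') (s : Set E) (t : Set E') : Prop :=
  ContDiffOn ℝ 1 f s ∧ Set.InjOn f s ∧ f '' s = t ∧
    ∃ g : E' → E, ContDiffOn ℝ 1 g t ∧ Set.InvOn g f s t

/-- The tangent cone of `X ⊆ E` at `x`: all velocities `c'(0)` of continuously differentiable
curves in `X` through `x`. -/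
def tangentSet (X : Set E) (x : E) : Set E :=
  {v | ∃ (c : ℝ → E) (ε : ℝ), 0 < ε ∧ ContDiffOn ℝ 1 c (Set.Ioo (-ε) ε) ∧
      (∀ s ∈ Set.Ioo (-ε) ε, c s ∈ X) ∧ c 0 = x ∧ HasDerivWithinAt c v (Set.Ioo (-ε) ε) 0}

/-- `X` is a continuously differentiable submanifold of codimension `m` of `E`. -/
def IsC1SubmanifoldCodim (X : Set E) (m : ℕ) : Prop :=
  ∀ x ∈ X, ∃ (O : Set E) (Φ : E → E) (H Q : Submodule ℝ E),
    IsOpen O ∧ x ∈ O ∧ IsClosed (H : Set E) ∧ IsCompl H Q ∧ Module.finrank ℝ Q = m ∧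
    IsOpen (Φ '' O) ∧ IsC1DiffeoOn Φ O (Φ '' O) ∧ Φ '' (X ∩ O) = (H : Set E) ∩ (Φ '' O)

/-- `X` is a continuously differentiable submanifold of `E`. -/
def IsC1Submanifold (X : Set E) : Prop :=
  ∀ x ∈ X, ∃ (O : Set E) (Φ : E → E) (H : Submodule ℝ E),
    IsOpen O ∧ x ∈ O ∧ IsClosed (H : Set E) ∧
    IsOpen (Φ '' O) ∧ IsC1DiffeoOn Φ O (Φ '' O) ∧ Φ '' (X ∩ O) = (H : Set E) ∩ (Φ '' O)

/-- `A` is an almost graph over `H`. -/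
def IsAlmostGraphOver (A : Set E) (H : Set E) : Prop :=
  ∃ (dm : Set E) (α : E → E), dm ⊆ H ∧ ContDiffOn ℝ 1 α dm ∧
    (∀ ζ ∈ dm ∩ A, α ζ = 0) ∧ (∀ ζ ∈ dm \ A, α ζ ∉ H) ∧
    IsC1DiffeoOn (fun ζ => ζ + α ζ) dm A

end diffeos

/-- The data of the delay differential system
`x'(t) = g(x(t-d_1(Lx_t)),…,x(t-d_kk(Lx_t)))`. -/
structure Setting (r : ℝ) (n kk : ℕ) (F : Type*) [NormedAddCommGroup F] [NormedSpace ℝ F] where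
  /-- The continuous linear map `L : C([-r,0],ℝⁿ) → F`. -/
  L : C(Icc0 r, Fin n → ℝ) →L[ℝ] F
  /-- The open set `W ⊆ F`. -/
  W : Set F
  Wopen : IsOpen W
  /-- The delay functions `d_k : W → [0,r]`. -/
  d : Fin kk → F → ℝ
  d_smooth : ∀ k, ContDiffOn ℝ 1 (d k) W
  d_mem : ∀ k, ∀ w ∈ W, d k w ∈ Set.Icc (0:ℝ) r
  /-- The open set `V ⊆ (ℝⁿ)^kk`. -/
  V : Set (Fin kk → Fin n → ℝ)
  Vopen : IsOpen V
  /-- The right hand side function `g : V → ℝⁿ`. -/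
  g : (Fin kk → Fin n → ℝ) → Fin n → ℝ
  g_smooth : ContDiffOn ℝ 1 g V

namespace Setting

variable {r : ℝ} {n kk : ℕ} {F : Type*} [NormedAddCommGroup F] [NormedSpace ℝ F]
variable (S : Setting r n kk F)

/-- `L` applied to (the `C⁰`-part of) `φ ∈ C¹`. -/
def Lof (φ : C1 r (Fin n → ℝ)) : F := S.L φ.1.1

/-- `φ̂ = (φ(-d_1(Lφ)),…,φ(-d_kk(Lφ)))`. -/
def hat (φ : C1 r (Fin n → ℝ)) : Fin kk → Fin n → ℝ := fun k => evC φ (-(S.d k (S.Lof φ)))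

/-- The domain `U = {φ ∈ C¹ : Lφ ∈ W, φ̂ ∈ V}`. -/
def U : Set (C1 r (Fin n → ℝ)) := {φ | S.Lof φ ∈ S.W ∧ S.hat φ ∈ S.V}

/-- The right hand side `f(φ) = g(φ̂)`. -/
def fmap (φ : C1 r (Fin n → ℝ)) : Fin n → ℝ := S.g (S.hat φ)

/-- The solution manifold `X_f = {φ ∈ U : φ'(0) = f(φ)}`. -/
def Xf : Set (C1 r (Fin n → ℝ)) := {φ | φ ∈ S.U ∧ dvC φ 0 = S.fmap φ}

/-- `W_J = {w ∈ W : d_j(w)=0 for j∈J, d_k(w)>0 for k∉J}`. -/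
def WJ (J : Finset (Fin kk)) : Set F :=
  {w | w ∈ S.W ∧ (∀ j ∈ J, S.d j w = 0) ∧ ∀ k ∉ J, 0 < S.d k w}

/-- `W^J = {w ∈ W : d_k(w)>0 for k∉J}`. -/
def WupJ (J : Finset (Fin kk)) : Set F :=
  {w | w ∈ S.W ∧ ∀ k ∉ J, 0 < S.d k w}

/-- `U_J = U ∩ L⁻¹(W_J)`. -/
def UJ (J : Finset (Fin kk)) : Set (C1 r (Fin n → ℝ)) := {φ | φ ∈ S.U ∧ S.Lof φ ∈ S.WJ J}

/-- `U^J = U ∩ L⁻¹(W^J)`. -/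
def UupJ (J : Finset (Fin kk)) : Set (C1 r (Fin n → ℝ)) := {φ | φ ∈ S.U ∧ S.Lof φ ∈ S.WupJ J}

/-- `X_{fJ} = X_f ∩ U_J`. -/
def XfJ (J : Finset (Fin kk)) : Set (C1 r (Fin n → ℝ)) := S.Xf ∩ S.UJ J

/-- Hypothesis (b): `g` is bounded. -/
def HypB : Prop := ∃ M, ∀ v ∈ S.V, ‖S.g v‖ ≤ M

/-- Hypothesis (d1b): `d₁ = 0` on `W` and `g` is bounded on subsets of `V` with bounded
first component. -/
def HypD1B (hk : 0 < kk) : Prop :=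
  (∀ w ∈ S.W, S.d ⟨0, hk⟩ w = 0) ∧
  ∀ B : Set (Fin n → ℝ), Bornology.IsBounded B →
    Bornology.IsBounded (S.g '' {v | v ∈ S.V ∧ v ⟨0, hk⟩ ∈ B})

/-- The partial derivative `∂_{(k-1)n+ν} g_μ (φ̂)`. -/
def dgCoeff (φ : C1 r (Fin n → ℝ)) (k : Fin kk) (ν : Fin n) (μ : Fin n) : ℝ :=
  fderivWithin ℝ S.g S.V (S.hat φ) (Pi.single k (Pi.single ν 1)) μ

/-- The right hand side of the formula for `Df_μ(φ)χ`. -/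
def dFormula (φ χ : C1 r (Fin n → ℝ)) (μ : Fin n) : ℝ :=
  ∑ k, ∑ ν, S.dgCoeff φ k ν μ *
    (evC χ (-(S.d k (S.Lof φ))) ν -
      dvC φ (-(S.d k (S.Lof φ))) ν * fderivWithin ℝ (S.d k) S.W (S.Lof φ) (S.Lof χ))

/-- The map `R^J(φ) = φ − Y_J(Lφ)·φ'(0)` of Section 4 of the paper. -/
def RJmap (y : Fin n → F → C1 r ℝ) (φ : C1 r (Fin n → ℝ)) : C1 r (Fin n → ℝ) :=
  φ - Ymap (fun ν => y ν (S.Lof φ)) (dvC φ 0)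

end Setting

/-!
Write `φ = R φ + Y·φ'(0)`. If `φ₁, φ₂ ∈ X_f` and `R φ₁ = R φ₂ = η`, then `L φ₁ = L φ₂ = L η`
(`L` kills `Y`), so both `x = φᵢ'(0)` solve `x = g(φ̂)` with `φ̂_k = η(-d_k) + x ⊙ ψ(-d_k)`,
the delays being those of `η`. Near `R X_{fK}` all delays are close to `0`, where `ψ` vanishes,
so on bounded sets of `x` this equation is a contraction by the local Lipschitz continuity of `g`,
and `φ₁'(0) = φ₂'(0)`. The bound on `φ'(0) = g(φ̂)` is global under (b), and under (d1b) it comes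
from `φ̂_1 = φ(0) = (R φ)(0)`. Under (K) all delays vanish, `φ̂` does not depend on `x`, and `R`
is injective on all of `X_f`.
-/

open Filter Topology NNReal

lemma exists_relOpen_nhds_injOn {α β : Type*} [TopologicalSpace β] {f : α → β}
    {X : Set α} {A Z : Set β} (hAZ : A ⊆ Z)
    (h : ∀ a ∈ A, ∃ O, IsOpen O ∧ a ∈ O ∧ InjOn f (X ∩ f ⁻¹' O)) :
    ∃ N : β → Set β,
      (∀ a ∈ A, a ∈ N a ∧ (∃ O, IsOpen O ∧ N a = Z ∩ O) ∧ InjOn f (X ∩ f ⁻¹' N a)) ∧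
      InjOn f (X ∩ ⋃ a ∈ A, f ⁻¹' N a) := by
  choose! O hOopen hmem hinj using h
  refine ⟨fun a => Z ∩ O a, fun a ha => ?_, ?_⟩
  · exact ⟨⟨hAZ ha, hmem a ha⟩, ⟨O a, hOopen a ha, rfl⟩,
      (hinj a ha).mono (inter_subset_inter_right _ (preimage_mono inter_subset_right))⟩
  · rintro x₁ ⟨hx₁, hU⟩ x₂ ⟨hx₂, -⟩ hf
    obtain ⟨a, ha, hN⟩ := mem_iUnion₂.1 hU
    exact hinj a ha ⟨hx₁, hN.2⟩ ⟨hx₂, show f x₂ ∈ O a from hf ▸ hN.2⟩ hf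

section C1eval

variable {r : ℝ} {E : Type*} [NormedAddCommGroup E] [NormedSpace ℝ E]

def evCₗ (t : ℝ) : C1 r E →ₗ[ℝ] E where
  toFun φ := evC φ t
  map_add' φ ψ := congrFun (extFun_add φ.1.1 ψ.1.1) t
  map_smul' c φ := congrFun (extFun_smul c φ.1.1) t

def dvCₗ (t : ℝ) : C1 r E →ₗ[ℝ] E where
  toFun φ := dvC φ t
  map_add' φ ψ := congrFun (extFun_add φ.1.2 ψ.1.2) t
  map_smul' c φ := congrFun (extFun_smul c φ.1.2) t

lemma evC_add (φ ξ : C1 r E) (t : ℝ) : evC (φ + ξ) t = evC φ t + evC ξ t :=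
  map_add (evCₗ t) φ ξ

lemma evC_sub (φ ξ : C1 r E) (t : ℝ) : evC (φ - ξ) t = evC φ t - evC ξ t :=
  map_sub (evCₗ t) φ ξ

lemma dvC_sub (φ ξ : C1 r E) (t : ℝ) : dvC (φ - ξ) t = dvC φ t - dvC ξ t :=
  map_sub (dvCₗ t) φ ξ

lemma norm_evC_le (φ : C1 r E) {t : ℝ} (ht : t ∈ Icc0 r) : ‖evC φ t‖ ≤ ‖φ‖ := by
  have : evC φ t = φ.1.1 ⟨t, ht⟩ := dif_pos ht
  rw [this]
  exact (φ.1.1.norm_coe_le_norm _).trans (norm_fst_le φ.1)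

lemma continuousOn_evC (φ : C1 r E) : ContinuousOn (evC φ) (Icc0 r) := by
  rw [continuousOn_iff_continuous_domRestrict]
  convert φ.1.1.continuous using 1
  funext t
  exact dif_pos t.2

lemma tendsto_evC {χ : C1 r E} {t₀ : ℝ} (ht₀ : t₀ ∈ Icc0 r) :
    Tendsto (fun p : C1 r E × ℝ => evC p.1 p.2) (𝓝 χ ×ˢ 𝓝[Icc0 r] t₀) (𝓝 (evC χ t₀)) := by
  have hsmall :
      Tendsto (fun p : C1 r E × ℝ => evC (p.1 - χ) p.2) (𝓝 χ ×ˢ 𝓝[Icc0 r] t₀) (𝓝 0) := by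
    refine squeeze_zero_norm' (a := fun p => ‖p.1 - χ‖) ?_ ?_
    · filter_upwards [prod_mem_prod univ_mem self_mem_nhdsWithin] with p hp
      exact norm_evC_le _ hp.2
    · exact (tendsto_iff_norm_sub_tendsto_zero.1 tendsto_id).comp tendsto_fst
  have hχ :
      Tendsto (fun p : C1 r E × ℝ => evC χ p.2) (𝓝 χ ×ˢ 𝓝[Icc0 r] t₀) (𝓝 (evC χ t₀)) :=
    (continuousOn_evC χ t₀ ht₀).tendsto.comp tendsto_snd
  simpa [evC_sub] using hsmall.add hχ

end C1eval

section Ymap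

variable {r : ℝ} {n : ℕ} (ψ : Fin n → C1 r ℝ)

lemma sCLM_apply (ν j : Fin n) (c : ℝ) : sCLM n ν c j = if j = ν then c else 0 := by
  by_cases h : j = ν <;> simp [sCLM, h]

lemma evC_Ymap (x : Fin n → ℝ) (t : ℝ) (j : Fin n) :
    evC (Ymap ψ x) t j = x j * evC (ψ j) t := by
  change evCₗ t (∑ ν, x ν • singleC1 ν (ψ ν)) j = _
  simp [evCₗ, evC, singleC1, extFun_CMsingle, sCLM_apply, Finset.sum_apply]

lemma dvC_Ymap (x : Fin n → ℝ) (t : ℝ) (j : Fin n) :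
    dvC (Ymap ψ x) t j = x j * dvC (ψ j) t := by
  change dvCₗ t (∑ ν, x ν • singleC1 ν (ψ ν)) j = _
  simp [dvCₗ, dvC, singleC1, extFun_CMsingle, sCLM_apply, Finset.sum_apply]

lemma evC_add_Ymap (η : C1 r (Fin n → ℝ)) (x : Fin n → ℝ) (t : ℝ) (j : Fin n) :
    evC (η + Ymap ψ x) t j = evC η t j + x j * evC (ψ j) t := by
  rw [evC_add, Pi.add_apply, evC_Ymap]

lemma RKmap_add_Ymap (φ : C1 r (Fin n → ℝ)) : RKmap ψ φ + Ymap ψ (dvC φ 0) = φ :=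
  sub_add_cancel φ _

lemma dvC_RKmap_zero (hψ1 : ∀ ν, dvC (ψ ν) 0 = 1) (φ : C1 r (Fin n → ℝ)) :
    dvC (RKmap ψ φ) 0 = 0 := by
  funext j
  simp [RKmap, dvC_sub, dvC_Ymap, hψ1]

lemma eq_of_RKmap_eq_of_dvC_eq {φ₁ φ₂ : C1 r (Fin n → ℝ)} (hR : RKmap ψ φ₁ = RKmap ψ φ₂)
    (hdv : dvC φ₁ 0 = dvC φ₂ 0) : φ₁ = φ₂ := by
  rw [← RKmap_add_Ymap ψ φ₁, ← RKmap_add_Ymap ψ φ₂, hR, hdv]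

lemma evC_RKmap_zero (hψ0 : ∀ ν, evC (ψ ν) 0 = 0) (φ : C1 r (Fin n → ℝ)) :
    evC (RKmap ψ φ) 0 = evC φ 0 := by
  funext j
  conv_rhs => rw [← RKmap_add_Ymap ψ φ]
  rw [evC_add_Ymap, hψ0, mul_zero, add_zero]

end Ymap

namespace Setting

variable {r : ℝ} {n kk : ℕ} {F : Type*} [NormedAddCommGroup F] [NormedSpace ℝ F]
variable (S : Setting r n kk F) {ψ : Fin n → C1 r ℝ}

lemma Lof_add_Ymap (hψL : ∀ ν, S.L (singleC1 ν (ψ ν)).1.1 = 0) (η : C1 r (Fin n → ℝ))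
    (x : Fin n → ℝ) : S.Lof (η + Ymap ψ x) = S.Lof η := by
  change S.L (η.1.1 + (∑ ν, x ν • singleC1 ν (ψ ν)).1.1) = S.L η.1.1
  simp [Prod.fst_sum, hψL]

lemma Lof_RKmap (hψL : ∀ ν, S.L (singleC1 ν (ψ ν)).1.1 = 0) (φ : C1 r (Fin n → ℝ)) :
    S.Lof (RKmap ψ φ) = S.Lof φ := by
  conv_rhs => rw [← RKmap_add_Ymap ψ φ, S.Lof_add_Ymap hψL]

lemma hat_add_Ymap (hψL : ∀ ν, S.L (singleC1 ν (ψ ν)).1.1 = 0) (η : C1 r (Fin n → ℝ))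
    (x : Fin n → ℝ) (k : Fin kk) (j : Fin n) :
    S.hat (η + Ymap ψ x) k j =
      evC η (-S.d k (S.Lof η)) j + x j * evC (ψ j) (-S.d k (S.Lof η)) := by
  rw [hat, S.Lof_add_Ymap hψL, evC_add_Ymap]

lemma dist_hat_add_Ymap_le (hψL : ∀ ν, S.L (singleC1 ν (ψ ν)).1.1 = 0)
    {η : C1 r (Fin n → ℝ)} {ε : ℝ} (hε : 0 ≤ ε)
    (hψε : ∀ k j, |evC (ψ j) (-S.d k (S.Lof η))| ≤ ε) (x₁ x₂ : Fin n → ℝ) :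
    dist (S.hat (η + Ymap ψ x₁)) (S.hat (η + Ymap ψ x₂)) ≤ ε * dist x₁ x₂ := by
  refine dist_pi_le_iff (by positivity) |>.2 fun k =>
    dist_pi_le_iff (by positivity) |>.2 fun j => ?_
  rw [S.hat_add_Ymap hψL, S.hat_add_Ymap hψL, Real.dist_eq, add_sub_add_left_eq_sub, ← sub_mul,
    abs_mul, mul_comm]
  have hj : |x₁ j - x₂ j| ≤ dist x₁ x₂ := by simpa [Real.dist_eq] using dist_le_pi_dist x₁ x₂ j
  exact mul_le_mul (hψε k j) hj (abs_nonneg _) hε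

lemma hat_eq_hat_add_Ymap (φ : C1 r (Fin n → ℝ)) :
    S.hat φ = S.hat (RKmap ψ φ + Ymap ψ (dvC φ 0)) := by
  rw [RKmap_add_Ymap]

lemma continuous_Lof : Continuous S.Lof :=
  S.L.continuous.comp (continuous_fst.comp continuous_subtype_val)

lemma neg_d_mem_Icc0 {w : F} (hw : w ∈ S.W) (k : Fin kk) : -S.d k w ∈ Icc0 r :=
  ⟨by linarith [(S.d_mem k w hw).2], by linarith [(S.d_mem k w hw).1]⟩

lemma tendsto_neg_d_Lof {χ : C1 r (Fin n → ℝ)} (hW : S.Lof χ ∈ S.W) {k : Fin kk}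
    (hd : S.d k (S.Lof χ) = 0) :
    Tendsto (fun η => -S.d k (S.Lof η)) (𝓝 χ) (𝓝[Icc0 r] 0) := by
  refine tendsto_nhdsWithin_iff.2 ⟨?_, ?_⟩
  · have hdc := ((S.d_smooth k).continuousOn.continuousAt (S.Wopen.mem_nhds hW)).tendsto
    simpa [hd] using (hdc.comp (S.continuous_Lof.tendsto χ)).neg
  · filter_upwards [S.continuous_Lof.continuousAt.preimage_mem_nhds (S.Wopen.mem_nhds hW)]
      with η hη using S.neg_d_mem_Icc0 hη k

lemma tendsto_hat_add_Ymap (hψL : ∀ ν, S.L (singleC1 ν (ψ ν)).1.1 = 0)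
    (hψ0 : ∀ ν, evC (ψ ν) 0 = 0) {χ : C1 r (Fin n → ℝ)} (hW : S.Lof χ ∈ S.W)
    (hd : ∀ k, S.d k (S.Lof χ) = 0) (x₀ : Fin n → ℝ) :
    Tendsto (fun p : C1 r (Fin n → ℝ) × (Fin n → ℝ) => S.hat (p.1 + Ymap ψ p.2))
      (𝓝 (χ, x₀)) (𝓝 fun _ => evC χ 0) := by
  refine tendsto_pi_nhds.2 fun k => tendsto_pi_nhds.2 fun j => ?_
  simp_rw [S.hat_add_Ymap hψL]
  have h0 : (0 : ℝ) ∈ Icc0 r := by simpa [hd k] using S.neg_d_mem_Icc0 hW k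
  have hτ := (S.tendsto_neg_d_Lof hW (hd k)).comp (tendsto_fst (f := 𝓝 χ) (g := 𝓝 x₀))
  have hη := (continuous_apply j).continuousAt.tendsto.comp
    ((tendsto_evC h0).comp (tendsto_fst.prodMk hτ))
  have hψ := (continuousOn_evC (ψ j) 0 h0).tendsto.comp hτ
  rw [hψ0] at hψ
  rw [nhds_prod_eq]
  simpa using hη.add (((continuous_apply j).tendsto x₀).comp tendsto_snd |>.mul hψ)

lemma eq_of_RKmap_eq_of_lipschitzOnWith (hψL : ∀ ν, S.L (singleC1 ν (ψ ν)).1.1 = 0)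
    {φ₁ φ₂ : C1 r (Fin n → ℝ)} (h₁ : φ₁ ∈ S.Xf) (h₂ : φ₂ ∈ S.Xf)
    (hR : RKmap ψ φ₁ = RKmap ψ φ₂) {Λ : ℝ≥0} {T : Set (Fin kk → Fin n → ℝ)}
    (hlip : LipschitzOnWith Λ S.g T) (hT₁ : S.hat φ₁ ∈ T) (hT₂ : S.hat φ₂ ∈ T) {ε : ℝ}
    (hε : 0 ≤ ε) (hψε : ∀ k j, |evC (ψ j) (-S.d k (S.Lof (RKmap ψ φ₁)))| ≤ ε)
    (hΛε : Λ * ε < 1) : φ₁ = φ₂ := by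
  have hcontr : dist (dvC φ₁ 0) (dvC φ₂ 0) ≤ Λ * ε * dist (dvC φ₁ 0) (dvC φ₂ 0) :=
    calc dist (dvC φ₁ 0) (dvC φ₂ 0) = dist (S.g (S.hat φ₁)) (S.g (S.hat φ₂)) := by
          rw [h₁.2, h₂.2, fmap, fmap]
      _ ≤ Λ * dist (S.hat φ₁) (S.hat φ₂) := hlip.dist_le_mul _ hT₁ _ hT₂
      _ ≤ Λ * (ε * dist (dvC φ₁ 0) (dvC φ₂ 0)) := by
          gcongr
          rw [S.hat_eq_hat_add_Ymap φ₁, S.hat_eq_hat_add_Ymap φ₂, ← hR]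
          exact S.dist_hat_add_Ymap_le hψL hε hψε _ _
      _ = Λ * ε * dist (dvC φ₁ 0) (dvC φ₂ 0) := by ring
  have hdist : dist (dvC φ₁ 0) (dvC φ₂ 0) = 0 := by
    nlinarith [dist_nonneg (x := dvC φ₁ 0) (y := dvC φ₂ 0)]
  exact eq_of_RKmap_eq_of_dvC_eq ψ hR (dist_eq_zero.1 hdist)

lemma injOn_RKmap_of_U_eq_UJ_univ (hψL : ∀ ν, S.L (singleC1 ν (ψ ν)).1.1 = 0)
    (hψ0 : ∀ ν, evC (ψ ν) 0 = 0) (hK : S.U = S.UJ Finset.univ) :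
    InjOn (RKmap ψ) S.Xf := by
  intro φ₁ h₁ φ₂ h₂ hR
  have hd : ∀ k, S.d k (S.Lof (RKmap ψ φ₁)) = 0 := by
    have hU : φ₁ ∈ S.UJ Finset.univ := hK ▸ h₁.1
    simpa [S.Lof_RKmap hψL] using fun k => hU.2.2.1 k (Finset.mem_univ k)
  have hhat : S.hat φ₁ = S.hat φ₂ := by
    rw [S.hat_eq_hat_add_Ymap φ₁, S.hat_eq_hat_add_Ymap φ₂, ← hR]
    refine dist_le_zero.1 ?_
    simpa using S.dist_hat_add_Ymap_le hψL le_rfl (fun k j => by simp [hd, hψ0]) _ _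
  exact eq_of_RKmap_eq_of_dvC_eq ψ hR (by rw [h₁.2, h₂.2, fmap, fmap, hhat])

lemma exists_isOpen_injOn_RKmap (hψL : ∀ ν, S.L (singleC1 ν (ψ ν)).1.1 = 0)
    (hψ0 : ∀ ν, evC (ψ ν) 0 = 0) {φ₀ : C1 r (Fin n → ℝ)} (hφ₀ : φ₀ ∈ S.XfJ Finset.univ)
    {M : ℝ} (hM : ∀ᶠ η in 𝓝 (RKmap ψ φ₀), ∀ φ ∈ S.Xf, RKmap ψ φ = η → ‖dvC φ 0‖ ≤ M) :
    ∃ O, IsOpen O ∧ RKmap ψ φ₀ ∈ O ∧ InjOn (RKmap ψ) (S.Xf ∩ RKmap ψ ⁻¹' O) := by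
  obtain ⟨⟨⟨-, hV⟩, -⟩, -, hW, hd, -⟩ := hφ₀
  set χ := RKmap ψ φ₀
  have hLχ : S.Lof χ = S.Lof φ₀ := S.Lof_RKmap hψL φ₀
  have hd₀ : ∀ k, S.d k (S.Lof χ) = 0 := fun k => hLχ ▸ hd k (Finset.mem_univ k)
  rw [← hLχ] at hW
  have hhat₀ : S.hat φ₀ = fun _ => evC χ 0 := by
    funext k j
    rw [S.hat_eq_hat_add_Ymap, S.hat_add_Ymap hψL, hd₀, neg_zero, hψ0, mul_zero, add_zero]
  obtain ⟨Λ, T, hT, hlip⟩ :=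
    (S.g_smooth.contDiffAt (S.Vopen.mem_nhds hV)).exists_lipschitzOnWith
  set ε : ℝ := 1 / (Λ + 1)
  have hε : 0 < ε := by positivity
  have hψ_small : ∀ᶠ η in 𝓝 χ, ∀ k j, |evC (ψ j) (-S.d k (S.Lof η))| ≤ ε := by
    refine eventually_all.2 fun k => eventually_all.2 fun j => ?_
    have h0 : (0 : ℝ) ∈ Icc0 r := by simpa [hd₀ k] using S.neg_d_mem_Icc0 hW k
    have hlim := (continuousOn_evC (ψ j) 0 h0).tendsto.comp (S.tendsto_neg_d_Lof hW (hd₀ k))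
    rw [hψ0] at hlim
    simpa using (hlim.abs.eventually_lt_const (by simpa using hε)).mono fun _ => le_of_lt
  have hhat_near : ∀ᶠ η in 𝓝 χ, ∀ x ∈ Metric.closedBall 0 M, S.hat (η + Ymap ψ x) ∈ T :=
    (isCompact_closedBall 0 M).eventually_forall_of_forall_eventually fun x _ =>
      (S.tendsto_hat_add_Ymap hψL hψ0 hW hd₀ x).eventually (hhat₀ ▸ hT)
  obtain ⟨O, hO, hOopen, hχO⟩ := eventually_nhds_iff.1 (hψ_small.and (hhat_near.and hM))
  refine ⟨O, hOopen, hχO, ?_⟩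
  rintro φ₁ ⟨h₁, hO₁⟩ φ₂ ⟨h₂, -⟩ hR
  obtain ⟨hsmall, hnear, hbd⟩ := hO _ hO₁
  have hhatT : ∀ φ ∈ S.Xf, RKmap ψ φ = RKmap ψ φ₁ → S.hat φ ∈ T := fun φ hφ hφR => by
    rw [S.hat_eq_hat_add_Ymap, hφR]
    exact hnear _ (mem_closedBall_zero_iff.2 (hbd φ hφ hφR))
  refine S.eq_of_RKmap_eq_of_lipschitzOnWith hψL h₁ h₂ hR hlip (hhatT _ h₁ rfl)
    (hhatT _ h₂ hR.symm) hε.le hsmall ?_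
  rw [mul_one_div, div_lt_one (by positivity)]
  exact lt_add_one _

lemma exists_eventually_norm_dvC_le_of_hypB (hb : S.HypB) (χ : C1 r (Fin n → ℝ)) :
    ∃ M, ∀ᶠ η in 𝓝 χ, ∀ φ ∈ S.Xf, RKmap ψ φ = η → ‖dvC φ 0‖ ≤ M := by
  obtain ⟨M, hM⟩ := hb
  exact ⟨M, Eventually.of_forall fun _ φ hφ _ => hφ.2 ▸ hM _ hφ.1.2⟩

lemma exists_eventually_norm_dvC_le_of_hypD1B {hk : 0 < kk} (hd1b : S.HypD1B hk)
    (hψ0 : ∀ ν, evC (ψ ν) 0 = 0) (χ : C1 r (Fin n → ℝ)) :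
    ∃ M, ∀ᶠ η in 𝓝 χ, ∀ φ ∈ S.Xf, RKmap ψ φ = η → ‖dvC φ 0‖ ≤ M := by
  obtain ⟨hd₁, hg⟩ := hd1b
  obtain ⟨M, hM⟩ := (hg _ (Metric.isBounded_closedBall (x := evC χ 0) (r := 1))).exists_norm_le
  refine ⟨M, Filter.mem_of_superset (Metric.ball_mem_nhds χ one_pos) ?_⟩
  rintro η hη φ hφ rfl
  have hW : S.Lof φ ∈ S.W := hφ.1.1
  have h0 : (0 : ℝ) ∈ Icc0 r := by simpa [hd₁ _ hW] using S.neg_d_mem_Icc0 hW ⟨0, hk⟩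
  have hfirst : S.hat φ ⟨0, hk⟩ = evC (RKmap ψ φ) 0 := by
    rw [evC_RKmap_zero ψ hψ0, hat, hd₁ _ hW, neg_zero]
  have hmem : S.hat φ ⟨0, hk⟩ ∈ Metric.closedBall (evC χ 0) 1 := by
    rw [hfirst, Metric.mem_closedBall, dist_eq_norm, ← evC_sub]
    exact (norm_evC_le _ h0).trans (mem_ball_iff_norm.1 hη).le
  exact hφ.2 ▸ hM _ ⟨_, ⟨hφ.1.2, hmem⟩, rfl⟩

end Setting

variable {r : ℝ} {n kk : ℕ} {F : Type*} [NormedAddCommGroup F] [NormedSpace ℝ F]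
  [FiniteDimensional ℝ F]

theorem statement6_general (hk : 0 < kk) (S : Setting r n kk F)
    (ψ : Fin n → C1 r ℝ)
    (hψL : ∀ ν, S.L (singleC1 ν (ψ ν)).1.1 = 0)
    (hψ0 : ∀ ν, evC (ψ ν) 0 = 0)
    (hψ1 : ∀ ν, dvC (ψ ν) 0 = 1)
    (hyp : S.HypB ∨ S.HypD1B hk ∨ S.U = S.UJ (Finset.univ : Finset (Fin kk))) :
    ∃ Vc : C1 r (Fin n → ℝ) → Set (C1 r (Fin n → ℝ)),
      (∀ χ ∈ RKmap ψ '' S.XfJ (Finset.univ : Finset (Fin kk)),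
        χ ∈ Vc χ ∧ (∃ O, IsOpen O ∧ Vc χ = (X0sub r n : Set (C1 r (Fin n → ℝ))) ∩ O) ∧
        Set.InjOn (RKmap ψ) (S.Xf ∩ (RKmap ψ) ⁻¹' (Vc χ))) ∧
      Set.InjOn (RKmap ψ)
        (S.Xf ∩ ⋃ χ ∈ RKmap ψ '' S.XfJ (Finset.univ : Finset (Fin kk)),
          (RKmap ψ) ⁻¹' (Vc χ)) := by
  refine exists_relOpen_nhds_injOn ?_ ?_
  · rintro _ ⟨φ, -, rfl⟩
    exact dvC_RKmap_zero ψ hψ1 φ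
  rintro _ ⟨φ₀, hφ₀, rfl⟩
  rcases hyp with hb | hd1b | hK
  · obtain ⟨M, hM⟩ := S.exists_eventually_norm_dvC_le_of_hypB hb (RKmap ψ φ₀)
    exact S.exists_isOpen_injOn_RKmap hψL hψ0 hφ₀ hM
  · obtain ⟨M, hM⟩ := S.exists_eventually_norm_dvC_le_of_hypD1B hd1b hψ0 (RKmap ψ φ₀)
    exact S.exists_isOpen_injOn_RKmap hψL hψ0 hφ₀ hM
  · exact ⟨univ, isOpen_univ, mem_univ _,
      (S.injOn_RKmap_of_U_eq_UJ_univ hψL hψ0 hK).mono inter_subset_left⟩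

/-- Proposition 3.4. -/
theorem statement6 (hr : 0 < r) (hk : 0 < kk) (S : Setting r n kk F)
    (hUK : (S.UJ (Finset.univ : Finset (Fin kk))).Nonempty)
    (z : ℝ) (hz : z ∈ Set.Ioo (-r) 0) (ψ : Fin n → C1 r ℝ)
    (hψL : ∀ ν, S.L (singleC1 ν (ψ ν)).1.1 = 0)
    (hψ0 : ∀ ν, evC (ψ ν) 0 = 0)
    (hψ1 : ∀ ν, dvC (ψ ν) 0 = 1)
    (hψz : ∀ ν, ∀ t ∈ Set.Icc (-r) z, evC (ψ ν) t = 0)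
    (hyp : S.HypB ∨ S.HypD1B hk ∨ S.U = S.UJ (Finset.univ : Finset (Fin kk))) :
    ∃ Vc : C1 r (Fin n → ℝ) → Set (C1 r (Fin n → ℝ)),
      (∀ χ ∈ RKmap ψ '' S.XfJ (Finset.univ : Finset (Fin kk)),
        χ ∈ Vc χ ∧ (∃ O, IsOpen O ∧ Vc χ = (X0sub r n : Set (C1 r (Fin n → ℝ))) ∩ O) ∧
        Set.InjOn (RKmap ψ) (S.Xf ∩ (RKmap ψ) ⁻¹' (Vc χ))) ∧
      Set.InjOn (RKmap ψ)
        (S.Xf ∩ ⋃ χ ∈ RKmap ψ '' S.XfJ (Finset.univ : Finset (Fin kk)),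
          (RKmap ψ) ⁻¹' (Vc χ)) :=
  statement6_general hk S ψ hψL hψ0 hψ1 hyp
end
end

section
/- Let a finite-dimensional real vector space ℱ, a continuous linear map λ:C→ℝ^q, a non-empty open subset 𝒲⊂ℱ, and a continuous function d:𝒲→(0,r] be given. Then there exists a continuously differentiable map y:𝒲→C^1 such that for every w∈𝒲: y(w)(0)=0, (y(w))'(0)=1, λ(y(w))=0, and y(w)(t)=0 for all t with −r ≤ t ≤ −d(w). -/
set_option linter.unusedSectionVars false

open Set

noncomputable section

/-!
For a single scale `δ`, a function `z ∈ C¹` with `z(0) = 0`, `z'(0) = 1`, `λ z = 0` and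
`z = 0` on `[-r, -δ]` exists: the ramps `t ↦ t · smoothTransition (1 + t/ε)`, `0 < ε ≤ δ`,
have all these properties except `λ z = 0`, and `λ` of them tends to `0` as `ε → 0`. The image
of the subspace of `C¹` functions vanishing at `0` and on `[-r, -δ]` under `φ ↦ (λ φ, φ'(0))`
is finite dimensional, hence closed, so it contains the limit `(0, 1)`.
Choosing such functions `Z k` at the dyadic scales `r / 2 ^ (k + 1)` and gluing them with a
smooth dyadic partition of unity in a scale variable `s` gives a `C¹` curve `s ↦ Y(s)` with
`Y(s)` vanishing on `[-r, -r s]`. Then `y(w) = Y(e(w))` for a smooth `e` with `0 < r e < d`.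
-/

open Filter Topology
open scoped Manifold

section Ramp

def cutoffRamp (ε t : ℝ) : ℝ := t * Real.smoothTransition (1 + t / ε)

variable {ε t : ℝ}

theorem contDiff_cutoffRamp (ε : ℝ) {n : ℕ∞} : ContDiff ℝ n (cutoffRamp ε) :=
  contDiff_id.mul <| Real.smoothTransition.contDiff.comp <|
    contDiff_const.add (contDiff_id.div_const ε)

@[simp]
theorem cutoffRamp_zero (ε : ℝ) : cutoffRamp ε 0 = 0 := by simp [cutoffRamp]

theorem cutoffRamp_of_le_neg (hε : 0 < ε) (ht : t ≤ -ε) : cutoffRamp ε t = 0 := by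
  have : 1 + t / ε ≤ 0 := by
    have : t / ε ≤ -1 := by rwa [div_le_iff₀ hε, neg_one_mul]
    linarith
  simp [cutoffRamp, Real.smoothTransition.zero_of_nonpos this]

theorem deriv_cutoffRamp_zero (ε : ℝ) : deriv (cutoffRamp ε) 0 = 1 := by
  have hst : DifferentiableAt ℝ (fun t => Real.smoothTransition (1 + t / ε)) 0 :=
    (Real.smoothTransition.contDiff (n := 1)).differentiable one_ne_zero _ |>.comp _ <|
      (differentiableAt_id.div_const ε).const_add 1
  have h : HasDerivAt (cutoffRamp ε)
      (1 * Real.smoothTransition (1 + 0 / ε) +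
        0 * deriv (fun t => Real.smoothTransition (1 + t / ε)) 0) 0 :=
    (hasDerivAt_id' 0).mul hst.hasDerivAt
  simpa [Real.smoothTransition.one] using h.deriv

theorem abs_cutoffRamp_le (hε : 0 < ε) (ht : t ≤ 0) : |cutoffRamp ε t| ≤ ε := by
  rcases le_or_gt t (-ε) with h | h
  · simpa [cutoffRamp_of_le_neg hε h] using hε.le
  · have hst : |Real.smoothTransition (1 + t / ε)| ≤ 1 := by
      rw [abs_of_nonneg (Real.smoothTransition.nonneg _)]
      exact Real.smoothTransition.le_one _
    calc |cutoffRamp ε t| = |t| * |Real.smoothTransition (1 + t / ε)| := abs_mul _ _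
      _ ≤ ε * 1 := mul_le_mul (abs_le.2 ⟨by linarith, by linarith⟩) hst (abs_nonneg _) hε.le
      _ = ε := mul_one ε

end Ramp

namespace C1

variable {r : ℝ} {E : Type*} [NormedAddCommGroup E] [NormedSpace ℝ E]

theorem extFun_of_mem (φ : C(Icc0 r, E)) {t : ℝ} (ht : t ∈ Icc0 r) : extFun φ t = φ ⟨t, ht⟩ :=
  dif_pos ht

def ofContDiff (f : ℝ → E) (hf : ContDiff ℝ 1 f) : C1 r E :=
  ⟨(⟨fun t => f t, hf.continuous.comp continuous_subtype_val⟩,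
    ⟨fun t => deriv f t, (hf.continuous_deriv le_rfl).comp continuous_subtype_val⟩),
    fun t ht => by
      rw [extFun_of_mem _ ht]
      exact ((hf.differentiable one_ne_zero t).hasDerivAt.hasDerivWithinAt).congr
        (fun s hs => extFun_of_mem _ hs) (extFun_of_mem _ ht)⟩

variable {f : ℝ → E} {hf : ContDiff ℝ 1 f} {t : ℝ}

theorem evC_ofContDiff (ht : t ∈ Icc0 r) : evC (ofContDiff (r := r) f hf) t = f t :=
  extFun_of_mem _ ht

theorem dvC_ofContDiff (ht : t ∈ Icc0 r) : dvC (ofContDiff (r := r) f hf) t = deriv f t :=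
  extFun_of_mem _ ht

theorem norm_ofContDiff_fst_le {C : ℝ} (hC : 0 ≤ C) (hfC : ∀ t ∈ Icc0 r, ‖f t‖ ≤ C) :
    ‖(ofContDiff (r := r) f hf).1.1‖ ≤ C :=
  (ContinuousMap.norm_le _ hC).2 fun t => hfC t t.2

variable (r E)

def evalₗ (t : ℝ) : C1 r E →ₗ[ℝ] E where
  toFun φ := evC φ t
  map_add' φ ψ := by simp [evC, extFun_add]
  map_smul' c φ := by simp [evC, extFun_smul]

def derivEvalₗ (t : ℝ) : C1 r E →ₗ[ℝ] E where
  toFun φ := dvC φ t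
  map_add' φ ψ := by simp [dvC, extFun_add]
  map_smul' c φ := by simp [dvC, extFun_smul]

def toCₗ : C1 r E →ₗ[ℝ] C(Icc0 r, E) := LinearMap.fst ℝ _ _ ∘ₗ (C1sub r E).subtype

def vanishingOn (s : Set ℝ) : Submodule ℝ (C1 r E) := ⨅ t ∈ s, LinearMap.ker (evalₗ r E t)

variable {r E}

theorem mem_vanishingOn {s : Set ℝ} {φ : C1 r E} :
    φ ∈ vanishingOn r E s ↔ ∀ t ∈ s, evC φ t = 0 := by
  simp only [vanishingOn, Submodule.mem_iInf, LinearMap.mem_ker]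
  rfl

end C1

section SingleScale

variable {r : ℝ} {G : Type*} [NormedAddCommGroup G] [NormedSpace ℝ G] [FiniteDimensional ℝ G]

theorem exists_mem_vanishingOn_dvC_eq_one_map_eq_zero (hr : 0 ≤ r)
    (lam : C(Icc0 r, ℝ) →L[ℝ] G) {δ : ℝ} (hδ : 0 < δ) :
    ∃ z ∈ C1.vanishingOn r ℝ (insert 0 (Set.Icc (-r) (-δ))), dvC z 0 = 1 ∧ lam z.1.1 = 0 := by
  set T : C1 r ℝ →ₗ[ℝ] G × ℝ := (lam.toLinearMap ∘ₗ C1.toCₗ r ℝ).prod (C1.derivEvalₗ r ℝ 0)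
  set S := (C1.vanishingOn r ℝ (insert 0 (Set.Icc (-r) (-δ)))).map T
  set ramp : ℝ → C1 r ℝ := fun ε => C1.ofContDiff (cutoffRamp ε) (contDiff_cutoffRamp ε)
  have h0 : (0 : ℝ) ∈ Icc0 r := ⟨neg_nonpos.2 hr, le_rfl⟩
  have hramp_mem : ∀ ε ∈ Set.Ioc 0 δ, T (ramp ε) ∈ S := by
    refine fun ε hε => Submodule.mem_map_of_mem (C1.mem_vanishingOn.2 ?_)
    rintro t (rfl | ht)
    · rw [C1.evC_ofContDiff h0, cutoffRamp_zero]
    · rw [C1.evC_ofContDiff ⟨ht.1, ht.2.trans (neg_nonpos.2 hδ.le)⟩]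
      exact cutoffRamp_of_le_neg hε.1 (ht.2.trans (neg_le_neg hε.2))
  have hlam : Tendsto (fun ε => lam (ramp ε).1.1) (𝓝[>] 0) (𝓝 0) := by
    have hbound : ∀ᶠ ε in 𝓝[>] (0 : ℝ), ‖lam (ramp ε).1.1‖ ≤ ‖lam‖ * ε := by
      filter_upwards [self_mem_nhdsWithin] with ε (hε : 0 < ε)
      refine lam.le_of_opNorm_le_of_le le_rfl (C1.norm_ofContDiff_fst_le hε.le fun t ht => ?_)
      exact abs_cutoffRamp_le hε ht.2
    refine squeeze_zero_norm' hbound ?_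
    simpa using (tendsto_id.const_mul ‖lam‖).mono_left (nhdsWithin_le_nhds (a := (0 : ℝ)))
  have hT : Tendsto (fun ε => T (ramp ε)) (𝓝[>] 0) (𝓝 (0, 1)) := by
    refine (hlam.prodMk_nhds tendsto_const_nhds).congr fun ε => ?_
    simp only [T, LinearMap.prod_apply]
    exact congrArg _ (C1.dvC_ofContDiff h0 |>.trans (deriv_cutoffRamp_zero ε)).symm
  obtain ⟨z, hz, hTz⟩ := (Submodule.closed_of_finiteDimensional S).mem_of_tendsto hT
    (eventually_of_mem (Ioc_mem_nhdsGT hδ) hramp_mem)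
  exact ⟨z, hz, congrArg Prod.snd hTz, congrArg Prod.fst hTz⟩

end SingleScale

section DyadicGluing

def dyadicStep (k : ℕ) (s : ℝ) : ℝ := Real.smoothTransition (2 ^ k * s - 1)

def dyadicBump (k : ℕ) (s : ℝ) : ℝ := dyadicStep (k + 1) s - dyadicStep k s

variable {k K : ℕ} {s : ℝ}

theorem dyadicStep_of_le_one (h : 2 ^ k * s ≤ 1) : dyadicStep k s = 0 :=
  Real.smoothTransition.zero_of_nonpos (sub_nonpos.2 h)

theorem dyadicStep_of_two_le (h : 2 ≤ 2 ^ k * s) : dyadicStep k s = 1 :=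
  Real.smoothTransition.one_of_one_le (by linarith)

theorem two_pow_mul_le_two_pow_succ_mul (hs : 0 ≤ s) : 2 ^ k * s ≤ 2 ^ (k + 1) * s :=
  mul_le_mul_of_nonneg_right (pow_le_pow_right₀ one_le_two k.le_succ) hs

theorem contDiff_dyadicBump (k : ℕ) {n : ℕ∞} : ContDiff ℝ n (dyadicBump k) := by
  have hstep (j : ℕ) : ContDiff ℝ n (dyadicStep j) :=
    Real.smoothTransition.contDiff.comp ((contDiff_const.mul contDiff_id).sub contDiff_const)
  exact (hstep _).sub (hstep _)

theorem dyadicBump_of_le_one (hs : 0 ≤ s) (h : 2 ^ (k + 1) * s ≤ 1) : dyadicBump k s = 0 := by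
  rw [dyadicBump, dyadicStep_of_le_one h,
    dyadicStep_of_le_one ((two_pow_mul_le_two_pow_succ_mul hs).trans h), sub_self]

theorem dyadicBump_of_two_le (hs : 0 ≤ s) (h : 2 ≤ 2 ^ k * s) : dyadicBump k s = 0 := by
  rw [dyadicBump, dyadicStep_of_two_le h,
    dyadicStep_of_two_le (h.trans (two_pow_mul_le_two_pow_succ_mul hs)), sub_self]

theorem sum_range_dyadicBump (hs : s ≤ 1) (hK : 2 ≤ 2 ^ K * s) :
    ∑ k ∈ Finset.range K, dyadicBump k s = 1 := by
  have htelescope : ∑ k ∈ Finset.range K, dyadicBump k s = dyadicStep K s - dyadicStep 0 s :=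
    Finset.sum_range_sub (fun k => dyadicStep k s) K
  rw [htelescope, dyadicStep_of_two_le hK,
    dyadicStep_of_le_one (by simpa using hs), sub_zero]

theorem two_le_two_pow_mul_of_ceil_le (hs : 0 < s) (hK : ⌈2 / s⌉₊ ≤ K) : 2 ≤ 2 ^ K * s := by
  have hK' : 2 / s ≤ 2 ^ K :=
    (Nat.le_ceil _).trans <| (Nat.cast_le.2 hK).trans (by exact_mod_cast K.lt_two_pow_self.le)
  rwa [div_le_iff₀ hs] at hK'

variable {V : Type*} [NormedAddCommGroup V] [NormedSpace ℝ V]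

/-- Only the bumps with `k < ⌈2 / s⌉₊` can be nonzero at `s > 0`, so this is the locally finite
sum `∑ₖ dyadicBump k s • Z k`. -/
def dyadicGlue (Z : ℕ → V) (s : ℝ) : V :=
  ∑ k ∈ Finset.range ⌈2 / s⌉₊, dyadicBump k s • Z k

variable (Z : ℕ → V)

theorem dyadicGlue_eq_sum (hs : 0 < s) (hK : ⌈2 / s⌉₊ ≤ K) :
    dyadicGlue Z s = ∑ k ∈ Finset.range K, dyadicBump k s • Z k := by
  refine Finset.sum_subset (Finset.range_subset_range.2 hK) fun k _ hk => ?_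
  rw [Finset.mem_range, not_lt] at hk
  rw [dyadicBump_of_two_le hs.le (two_le_two_pow_mul_of_ceil_le hs hk), zero_smul]

theorem contDiffOn_dyadicGlue {n : ℕ∞} : ContDiffOn ℝ n (dyadicGlue Z) (Set.Ioi 0) := by
  refine contDiffOn_of_locally_contDiffOn fun s₀ (hs₀ : 0 < s₀) =>
    ⟨Set.Ioi (s₀ / 2), isOpen_Ioi, half_lt_self hs₀, ?_⟩
  have hsum : ContDiff ℝ n fun s => ∑ k ∈ Finset.range ⌈2 / (s₀ / 2)⌉₊, dyadicBump k s • Z k :=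
    ContDiff.sum fun k _ => (contDiff_dyadicBump k).smul contDiff_const
  refine hsum.contDiffOn.congr fun s hs => dyadicGlue_eq_sum Z hs.1 (Nat.ceil_mono ?_)
  exact div_le_div_of_nonneg_left zero_le_two (half_pos hs₀) (le_of_lt hs.2)

variable {G : Type*} [AddCommGroup G] [Module ℝ G] (ℓ : V →ₗ[ℝ] G)

theorem map_dyadicGlue {c : G} (hZ : ∀ k, ℓ (Z k) = c) (hs : 0 < s) (hs1 : s ≤ 1) :
    ℓ (dyadicGlue Z s) = c := by
  simp only [dyadicGlue, map_sum, map_smul, hZ, ← Finset.sum_smul,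
    sum_range_dyadicBump hs1 (two_le_two_pow_mul_of_ceil_le hs le_rfl), one_smul]

theorem map_dyadicGlue_eq_zero (hZ : ∀ k, 1 < 2 ^ (k + 1) * s → ℓ (Z k) = 0) (hs : 0 ≤ s) :
    ℓ (dyadicGlue Z s) = 0 := by
  refine (map_sum ℓ _ _).trans (Finset.sum_eq_zero fun k _ => ?_)
  rw [map_smul]
  rcases le_or_gt (2 ^ (k + 1) * s) 1 with h | h
  · rw [dyadicBump_of_le_one hs h, zero_smul]
  · rw [hZ k h, smul_zero]

end DyadicGluing

theorem dyadicGlue_mem_vanishingOn {r s : ℝ} (hr : 0 < r) (hs : 0 ≤ s) {Z : ℕ → C1 r ℝ}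
    (hZ : ∀ k, Z k ∈ C1.vanishingOn r ℝ (insert 0 (Set.Icc (-r) (-(r / 2 ^ (k + 1)))))) :
    dyadicGlue Z s ∈ C1.vanishingOn r ℝ (insert 0 (Set.Icc (-r) (-(r * s)))) := by
  refine C1.mem_vanishingOn.2 fun t ht => map_dyadicGlue_eq_zero Z (C1.evalₗ r ℝ t) ?_ hs
  intro k hk
  refine C1.mem_vanishingOn.1 (hZ k) t (ht.imp_right fun ht => ⟨ht.1, ht.2.trans ?_⟩)
  rw [neg_le_neg_iff, div_le_iff₀ (by positivity)]
  nlinarith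

theorem IsOpen.exists_contDiffOn_mem_Ioo {E : Type*} [NormedAddCommGroup E] [NormedSpace ℝ E]
    [FiniteDimensional ℝ E] {U : Set E} (hU : IsOpen U) {f : E → ℝ} (hf : ContinuousOn f U)
    (hpos : ∀ x ∈ U, 0 < f x) (n : ℕ∞) :
    ∃ g : E → ℝ, ContDiffOn ℝ n g U ∧ ∀ x ∈ U, g x ∈ Set.Ioo 0 (f x) := by
  classical
  let U' : TopologicalSpace.Opens E := ⟨U, hU⟩
  have : LocallyCompactSpace U' := hU.locallyCompactSpace
  have hloc (x : U') : ∃ c : ℝ, ∀ᶠ y : U' in 𝓝 x, c ∈ Set.Ioo 0 (f y) := by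
    have hfx : ContinuousAt (fun y : U' => f y) x :=
      (hf.continuousAt (hU.mem_nhds x.2)).comp continuous_subtype_val.continuousAt
    exact ⟨f x / 2, (hfx.eventually (lt_mem_nhds (half_lt_self (hpos x x.2)))).mono
      fun y hy => ⟨half_pos (hpos x x.2), hy⟩⟩
  obtain ⟨g, hg⟩ := exists_contMDiffMap_forall_mem_convex_of_local_const 𝓘(ℝ, E) (n := n)
    (t := fun x : U' => Set.Ioo 0 (f x)) (fun _ => convex_Ioo _ _) hloc
  refine ⟨fun x => if hx : x ∈ U then g ⟨x, hx⟩ else 0, fun x hx => ?_, fun x hx => ?_⟩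
  · have hext : ContMDiffAt 𝓘(ℝ, E) 𝓘(ℝ, ℝ) n
        (fun y => if hy : y ∈ U then g ⟨y, hy⟩ else 0) x := by
      rw [← contMDiffAt_subtype_iff (U := U') (x := ⟨x, hx⟩)]
      simpa [U'] using g.contMDiff ⟨x, hx⟩
    exact hext.contDiffAt.contDiffWithinAt
  · simpa [hx] using hg ⟨x, hx⟩

theorem statement9_general {r : ℝ} (hr : 0 < r) {q : ℕ} {FF : Type*} [NormedAddCommGroup FF]
    [NormedSpace ℝ FF] [FiniteDimensional ℝ FF]
    (lam : C(Icc0 r, ℝ) →L[ℝ] (Fin q → ℝ))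
    (WW : Set FF) (hW : IsOpen WW)
    (d : FF → ℝ) (hd : ContinuousOn d WW) (hdr : ∀ w ∈ WW, d w ∈ Set.Ioc (0:ℝ) r) :
    ∃ y : FF → C1 r ℝ, ContDiffOn ℝ 1 y WW ∧ ∀ w ∈ WW,
      evC (y w) 0 = 0 ∧ dvC (y w) 0 = 1 ∧ lam (y w).1.1 = 0 ∧
      ∀ t ∈ Set.Icc (-r) (-(d w)), evC (y w) t = 0 := by
  choose Z hZvan hZdv hZlam using fun k : ℕ =>
    exists_mem_vanishingOn_dvC_eq_one_map_eq_zero hr.le lam (δ := r / 2 ^ (k + 1))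
      (by positivity)
  obtain ⟨e, he, heI⟩ := hW.exists_contDiffOn_mem_Ioo (hd.div_const r)
    (fun w hw => div_pos (hdr w hw).1 hr) 1
  refine ⟨fun w => dyadicGlue Z (e w),
    (contDiffOn_dyadicGlue Z).comp he fun w hw => (heI w hw).1, fun w hw => ?_⟩
  obtain ⟨he0, hed⟩ := heI w hw
  rw [lt_div_iff₀ hr] at hed
  have he1 : e w ≤ 1 := le_of_mul_le_mul_right (by linarith [(hdr w hw).2]) hr
  have hvan := C1.mem_vanishingOn.1 (dyadicGlue_mem_vanishingOn hr he0.le hZvan)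
  exact ⟨hvan 0 (Set.mem_insert _ _),
    map_dyadicGlue Z (C1.derivEvalₗ r ℝ 0) hZdv he0 he1,
    map_dyadicGlue Z (lam.toLinearMap ∘ₗ C1.toCₗ r ℝ) hZlam he0 he1,
    fun t ht => hvan t (Or.inr ⟨ht.1, ht.2.trans (by linarith)⟩)⟩

/-- Proposition 4.1. -/
theorem statement9 {r : ℝ} (hr : 0 < r) {q : ℕ} {FF : Type*} [NormedAddCommGroup FF]
    [NormedSpace ℝ FF] [FiniteDimensional ℝ FF]
    (lam : C(Icc0 r, ℝ) →L[ℝ] (Fin q → ℝ))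
    (WW : Set FF) (hW : IsOpen WW) (hne : WW.Nonempty)
    (d : FF → ℝ) (hd : ContinuousOn d WW) (hdr : ∀ w ∈ WW, d w ∈ Set.Ioc (0:ℝ) r) :
    ∃ y : FF → C1 r ℝ, ContDiffOn ℝ 1 y WW ∧ ∀ w ∈ WW,
      evC (y w) 0 = 0 ∧ dvC (y w) 0 = 1 ∧ lam (y w).1.1 = 0 ∧
      ∀ t ∈ Set.Icc (-r) (-(d w)), evC (y w) t = 0 :=
  statement9_general hr lam WW hW d hd hdr
end
end
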